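/- arXiv:2412.11287 — 5 statements merged into one kernel-verified Lean document; each statement's English description precedes it below -/
import Mathlib

section
/- For distinct i,j ∈ I, the smallest generalised nice set containing P_{i,j,i} equals {{0,0},{0,i},{0,j},{0,i*j},{i,i},{i,j},{i,i*j}}. -/
/-- The seven lines of the Fano plane. -/
def fanoLines : List (List ℕ) := [[1,2,5],[5,6,7],[7,4,1],[1,3,6],[6,4,2],[2,7,3],[3,4,5]]

/-- The Fano operation `*` extended to `I₀ = {0,…,7}`: `0*i = i*0 = i`, `i*i = 0`,
and for distinct `i, j ∈ I` it is the third point on the line through `i` and `j`. -/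
def fstar (i j : ℕ) : ℕ :=
  if i = j then 0
  else if i = 0 then j
  else if j = 0 then i
  else
    match fanoLines.find? (fun l => l.contains i && l.contains j) with
    | some l => (l.filter (fun x => x != i && x != j)).headD 0
    | none => 0

/-- The points of the Fano plane. -/
def I : Set ℕ := {1,2,3,4,5,6,7}

/-- The extended point set `I₀ = I ∪ {0}`. -/
def I0 : Set ℕ := {0,1,2,3,4,5,6,7}

/-- `X₀`: unordered pairs from `I₀` (repetitions allowed). -/
def X0 : Set (Sym2 ℕ) := {z | ∃ i ∈ I0, ∃ j ∈ I0, z = s(i,j)}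

/-- `X`: unordered pairs of two distinct points of `I`. -/
def X : Set (Sym2 ℕ) := {z | ∃ i ∈ I, ∃ j ∈ I, i ≠ j ∧ z = s(i,j)}

/-- `X_F = {{0,i} : i ∈ I₀}`. -/
def XF : Set (Sym2 ℕ) := {z | ∃ i ∈ I0, z = s(0,i)}

/-- `P_{a,b,c}`. -/
def P (a b c : ℕ) : Set (Sym2 ℕ) :=
  {s(a,b), s(b,c), s(c,a), s(a, fstar b c), s(b, fstar c a), s(c, fstar a b)}

/-- A generalised nice set: a subset of `X₀` such that `{a,b},{a*b,c} ∈ T` implies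
`P_{a,b,c} ⊆ T` for all `a, b, c ∈ I₀`. -/
def IsGNS (T : Set (Sym2 ℕ)) : Prop :=
  T ⊆ X0 ∧ ∀ a ∈ I0, ∀ b ∈ I0, ∀ c ∈ I0,
    s(a,b) ∈ T → s(fstar a b, c) ∈ T → P a b c ⊆ T

/-- A nice set: a subset of `X` such that for all generative `i, j, k ∈ I`,
`{i,j},{i*j,k} ∈ T` implies `P_{i,j,k} ⊆ T`. -/
def IsNice (T : Set (Sym2 ℕ)) : Prop :=
  T ⊆ X ∧ ∀ i ∈ I, ∀ j ∈ I, ∀ k ∈ I, i ≠ j → i ≠ k → j ≠ k → k ≠ fstar i j →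
    s(i,j) ∈ T → s(fstar i j, k) ∈ T → P i j k ⊆ T

/-- The smallest generalised nice set containing `S`. -/
def gnsClosure (S : Set (Sym2 ℕ)) : Set (Sym2 ℕ) := ⋂₀ {T | IsGNS T ∧ S ⊆ T}

/-- A collineation of the Fano plane, realised as a permutation of `ℕ` fixing the
complement of `I` and preserving collinearity. -/
def IsColl (σ : Equiv.Perm ℕ) : Prop :=
  (∀ n, n ∉ I → σ n = n) ∧
  ∀ i ∈ I, ∀ j ∈ I, i ≠ j → σ (fstar i j) = fstar (σ i) (σ j)

lemma fstar_zero_left (a : ℕ) : fstar 0 a = a := by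
  rcases eq_or_ne a 0 with rfl|h
  · simp [fstar]
  · simp [fstar, h, Ne.symm h]

lemma fstar_zero_right (a : ℕ) : fstar a 0 = a := by
  rcases eq_or_ne a 0 with rfl|h
  · simp [fstar]
  · simp [fstar, h]

lemma fstar_self (a : ℕ) : fstar a a = 0 := by simp [fstar]

lemma fstar_facts : ∀ i ∈ Finset.range 8, ∀ j ∈ Finset.range 8, i ≠ 0 → j ≠ 0 → i ≠ j →
  (fstar i j < 8 ∧ fstar i j ≠ 0 ∧ fstar i j ≠ i ∧ fstar i j ≠ j ∧
   fstar j i = fstar i j ∧ fstar i (fstar i j) = j ∧ fstar (fstar i j) i = j ∧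
   fstar j (fstar i j) = i ∧ fstar (fstar i j) j = i) := by decide

lemma mem_I0_iff (a : ℕ) : a ∈ I0 ↔ a < 8 := by simp [I0]; omega

lemma gns_R (i j k : ℕ) (hi8 : i < 8) (hj8 : j < 8) (hk8 : k < 8)
    (hi0 : i ≠ 0) (hj0 : j ≠ 0) (hk0 : k ≠ 0)
    (hij : i ≠ j) (hik : i ≠ k) (hjk : j ≠ k)
    (e1 : fstar i j = k) (e2 : fstar j i = k) (e3 : fstar i k = j) (e4 : fstar k i = j)
    (e5 : fstar j k = i) (e6 : fstar k j = i) :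
    IsGNS {s(0,0), s(0,i), s(0,j), s(0,k), s(i,i), s(i,j), s(i,k)} := by
  constructor
  · intro z hz
    have h0 : (0:ℕ) ∈ I0 := (mem_I0_iff 0).mpr (by omega)
    have hi : i ∈ I0 := (mem_I0_iff i).mpr hi8
    have hj : j ∈ I0 := (mem_I0_iff j).mpr hj8
    have hk : k ∈ I0 := (mem_I0_iff k).mpr hk8
    simp only [Set.mem_insert_iff, Set.mem_singleton_iff] at hz
    rcases hz with rfl|rfl|rfl|rfl|rfl|rfl|rfl
    · exact ⟨0, h0, 0, h0, rfl⟩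
    · exact ⟨0, h0, i, hi, rfl⟩
    · exact ⟨0, h0, j, hj, rfl⟩
    · exact ⟨0, h0, k, hk, rfl⟩
    · exact ⟨i, hi, i, hi, rfl⟩
    · exact ⟨i, hi, j, hj, rfl⟩
    · exact ⟨i, hi, k, hk, rfl⟩
  · intro a _ b _ c _ h1 h2
    simp only [Set.mem_insert_iff, Set.mem_singleton_iff, Sym2.eq_iff] at h1
    rcases h1 with (⟨rfl,rfl⟩|⟨rfl,rfl⟩)|(⟨rfl,rfl⟩|⟨rfl,rfl⟩)|(⟨rfl,rfl⟩|⟨rfl,rfl⟩)|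
      (⟨rfl,rfl⟩|⟨rfl,rfl⟩)|(⟨rfl,rfl⟩|⟨rfl,rfl⟩)|(⟨rfl,rfl⟩|⟨rfl,rfl⟩)|(⟨rfl,rfl⟩|⟨rfl,rfl⟩) <;>
    simp only [fstar_zero_left, fstar_zero_right, fstar_self, e1, e2, e3, e4, e5, e6] at h2 <;>
    simp only [Set.mem_insert_iff, Set.mem_singleton_iff, Sym2.eq_iff,
      hi0, hj0, hk0, hij, hik, hjk, Ne.symm hi0, Ne.symm hj0, Ne.symm hk0,
      hij.symm, hik.symm, hjk.symm, ne_eq, false_and, and_false, or_false, false_or] at h2 <;>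
    all_goals simp only [true_and, or_self] at h2
    all_goals first
      | (rcases h2 with (rfl|rfl|rfl|rfl))
      | (rcases h2 with (rfl|rfl))
    all_goals simp only [P, Set.insert_subset_iff, Set.singleton_subset_iff, fstar_zero_left,
      fstar_zero_right, fstar_self, e1, e2, e3, e4, e5, e6, Set.mem_insert_iff,
      Set.mem_singleton_iff, Sym2.eq_iff]
    all_goals simp

lemma chain_R (i j k : ℕ) (hi8 : i < 8) (hj8 : j < 8) (hk8 : k < 8)
    (e2 : fstar j i = k) (T : Set (Sym2 ℕ)) (hT : IsGNS T) (hP : P i j i ⊆ T) :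
    ({s(0,0), s(0,i), s(0,j), s(0,k), s(i,i), s(i,j), s(i,k)} : Set (Sym2 ℕ)) ⊆ T := by
  have h0 : (0:ℕ) ∈ I0 := (mem_I0_iff 0).mpr (by omega)
  have hiI : i ∈ I0 := (mem_I0_iff i).mpr hi8
  have hjI : j ∈ I0 := (mem_I0_iff j).mpr hj8
  have hij' : s(i,j) ∈ T := hP (by simp [P])
  have hii : s(i,i) ∈ T := hP (by simp [P])
  have hik : s(i,k) ∈ T := hP (by simp [P, e2])
  have hj0 : s(j,0) ∈ T := hP (by simp [P, fstar_self])
  have hP1 : P 0 j i ⊆ T := hT.2 0 h0 j hjI i hiI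
    (by rw [Sym2.eq_swap]; exact hj0)
    (by rw [fstar_zero_left, Sym2.eq_swap]; exact hij')
  have hi0' : s(i,0) ∈ T := hP1 (by simp [P])
  have h0k : s(0,k) ∈ T := hP1 (by simp [P, e2])
  have hP2 : P j 0 0 ⊆ T := hT.2 j hjI 0 h0 0 h0 hj0
    (by rw [fstar_zero_right]; exact hj0)
  have h00 : s(0,0) ∈ T := hP2 (by simp [P])
  intro z hz
  simp only [Set.mem_insert_iff, Set.mem_singleton_iff] at hz
  rcases hz with rfl|rfl|rfl|rfl|rfl|rfl|rfl
  · exact h00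
  · rw [Sym2.eq_swap]; exact hi0'
  · rw [Sym2.eq_swap]; exact hj0
  · exact h0k
  · exact hii
  · exact hij'
  · exact hik

theorem gnsClosure_P_iji (i j : ℕ) (hi : i ∈ I) (hj : j ∈ I) (hij : i ≠ j) :
    gnsClosure (P i j i) =
      {s(0,0), s(0,i), s(0,j), s(0, fstar i j), s(i,i), s(i,j), s(i, fstar i j)} := by
  have hi' : i < 8 ∧ i ≠ 0 := by simp [I] at hi; omega
  have hj' : j < 8 ∧ j ≠ 0 := by simp [I] at hj; omega
  obtain ⟨hk8, hk0, hki, hkj, e2, e3, e4, e5, e6⟩ :=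
    fstar_facts i (Finset.mem_range.mpr hi'.1) j (Finset.mem_range.mpr hj'.1) hi'.2 hj'.2 hij
  apply subset_antisymm
  · refine Set.sInter_subset_of_mem ⟨gns_R i j (fstar i j) hi'.1 hj'.1 hk8 hi'.2 hj'.2 hk0
      hij (Ne.symm hki) (Ne.symm hkj) rfl e2 e3 e4 e5 e6, ?_⟩
    simp only [P, Set.insert_subset_iff, Set.singleton_subset_iff, e2, fstar_self,
      Set.mem_insert_iff, Set.mem_singleton_iff, Sym2.eq_iff]
    simp
  · exact Set.subset_sInter fun T hT =>
      chain_R i j (fstar i j) hi'.1 hj'.1 hk8 e2 T hT.1 hT.2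
end

section
/- For i ∈ I, the smallest generalised nice set containing P_{i,i,i} = {{0,i},{i,i}} equals P_{0,i,i} = {{0,i},{i,i},{0,0}}. -/
theorem gnsClosure_P_iii (i : ℕ) (hi : i ∈ I) :
    gnsClosure (P i i i) = P 0 i i := by
  have hi0 : i ≠ 0 := by
    simp [I] at hi; rcases hi with h|h|h|h|h|h|h <;> omega
  have h0i : (0:ℕ) ≠ i := Ne.symm hi0
  have hI0 : i ∈ I0 := by
    simp [I] at hi; simp [I0]; tauto
  have h0I0 : (0:ℕ) ∈ I0 := by simp [I0]
  have hfii : fstar i i = 0 := by simp [fstar]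
  have hf0i : fstar 0 i = i := by simp [fstar, h0i]
  have hfi0 : fstar i 0 = i := by simp [fstar, hi0]
  have hf00 : fstar 0 0 = 0 := by simp [fstar]
  set T3 : Set (Sym2 ℕ) := {s(0,i), s(i,i), s(0,0)} with hT3
  have hswap : s(i,0) = s(0,i) := Sym2.eq_swap
  have hP : P 0 i i = T3 := by
    ext z
    simp only [P, hfii, hf0i, hfi0, hswap, hT3, Set.mem_insert_iff,
      Set.mem_singleton_iff]
    tauto
  have hpair : ∀ x y : ℕ, (x = 0 ∨ x = i) → (y = 0 ∨ y = i) → s(x,y) ∈ T3 := by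
    rintro x y (rfl|rfl) (rfl|rfl) <;> simp [hT3, hswap]
  have hfcl : ∀ x y : ℕ, (x = 0 ∨ x = i) → (y = 0 ∨ y = i) →
      (fstar x y = 0 ∨ fstar x y = i) := by
    rintro x y (rfl|rfl) (rfl|rfl) <;> simp [hfii, hf0i, hfi0, hf00]
  have hPsub : ∀ x y z : ℕ, (x = 0 ∨ x = i) → (y = 0 ∨ y = i) → (z = 0 ∨ z = i) →
      P x y z ⊆ T3 := by
    intro x y z hx hy hz w hw
    simp only [P, Set.mem_insert_iff, Set.mem_singleton_iff] at hw
    rcases hw with rfl|rfl|rfl|rfl|rfl|rfl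
    · exact hpair x y hx hy
    · exact hpair y z hy hz
    · exact hpair z x hz hx
    · exact hpair x _ hx (hfcl y z hy hz)
    · exact hpair y _ hy (hfcl z x hz hx)
    · exact hpair z _ hz (hfcl x y hx hy)
  have hGNS : IsGNS T3 := by
    constructor
    · intro z hz
      rcases hz with rfl|rfl|rfl
      · exact ⟨0, h0I0, i, hI0, rfl⟩
      · exact ⟨i, hI0, i, hI0, rfl⟩
      · exact ⟨0, h0I0, 0, h0I0, rfl⟩
    · intro a _ b _ c _ h1 h2
      have hab : (a = 0 ∨ a = i) ∧ (b = 0 ∨ b = i) := by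
        simp only [hT3, Set.mem_insert_iff, Set.mem_singleton_iff, Sym2.eq_iff] at h1
        tauto
      have hc : c = 0 ∨ c = i := by
        rcases hfcl a b hab.1 hab.2 with h|h <;> rw [h] at h2 <;>
          simp only [hT3, Set.mem_insert_iff, Set.mem_singleton_iff, Sym2.eq_iff,
            hi0, h0i, false_and, and_false, false_or, or_false] at h2 <;> tauto
      exact hPsub a b c hab.1 hab.2 hc
  have hPiii : P i i i ⊆ T3 := by
    intro z hz
    simp only [P, hfii, Set.mem_insert_iff, Set.mem_singleton_iff] at hz
    rcases hz with rfl|rfl|rfl|rfl|rfl|rfl <;>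
      [exact hpair i i (Or.inr rfl) (Or.inr rfl);
       exact hpair i i (Or.inr rfl) (Or.inr rfl);
       exact hpair i i (Or.inr rfl) (Or.inr rfl);
       exact hpair i 0 (Or.inr rfl) (Or.inl rfl);
       exact hpair i 0 (Or.inr rfl) (Or.inl rfl);
       exact hpair i 0 (Or.inr rfl) (Or.inl rfl)]
  rw [hP]
  apply Set.Subset.antisymm
  · intro z hz
    exact hz T3 ⟨hGNS, hPiii⟩
  · intro z hz T hT
    rcases hT with ⟨hTg, hTs⟩
    have h1 : s(i,i) ∈ T := hTs (by simp [P])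
    have h2 : s(0,i) ∈ T := by
      rw [← hswap]
      exact hTs (by simp only [P, hfii, Set.mem_insert_iff, Set.mem_singleton_iff]; tauto)
    have := hTg.2 0 h0I0 i hI0 i hI0 h2 (by rw [hf0i]; exact h1)
    rw [hP] at this
    exact this hz
end

section
/- A subset T of X is a generalised nice set if and only if (i) T is a nice set, and (ii) there are no i,j ∈ I with j ≠ i such that both {i,j} ∈ T and {i, i*j} ∈ T. -/
lemma I_sub_I0 : I ⊆ I0 := by
  intro x hx
  simp [I, I0] at hx ⊢
  tauto

lemma mem_X_elim {a b : ℕ} (h : s(a,b) ∈ X) : a ∈ I ∧ b ∈ I ∧ a ≠ b := by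
  obtain ⟨i, hi, j, hj, hij, he⟩ := h
  rw [Sym2.eq_iff] at he
  rcases he with ⟨rfl, rfl⟩ | ⟨rfl, rfl⟩ <;> exact ⟨by assumption, by assumption, by tauto⟩

lemma diag_not_mem_X (a : ℕ) : s(a,a) ∉ X := by
  intro h
  exact (mem_X_elim h).2.2 rfl

lemma fstar_comm {a b : ℕ} (ha : a ∈ I) (hb : b ∈ I) : fstar a b = fstar b a := by
  simp only [I, Set.mem_insert_iff, Set.mem_singleton_iff] at ha hb
  rcases ha with rfl|rfl|rfl|rfl|rfl|rfl|rfl <;>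
    rcases hb with rfl|rfl|rfl|rfl|rfl|rfl|rfl <;> decide

theorem gns_subset_X_iff (T : Set (Sym2 ℕ)) (hTX : T ⊆ X) :
    IsGNS T ↔
      IsNice T ∧
      ¬ ∃ i ∈ I, ∃ j ∈ I, j ≠ i ∧ s(i, j) ∈ T ∧ s(i, fstar i j) ∈ T := by
  constructor
  · intro hG
    refine ⟨⟨hTX, ?_⟩, ?_⟩
    · intro i hi j hj k hk _ _ _ _ h1 h2
      exact hG.2 i (I_sub_I0 hi) j (I_sub_I0 hj) k (I_sub_I0 hk) h1 h2
    · rintro ⟨i, hi, j, hj, hji, h1, h2⟩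
      have h2' : s(fstar i j, i) ∈ T := by rwa [Sym2.eq_swap] at h2
      have hP := hG.2 i (I_sub_I0 hi) j (I_sub_I0 hj) i (I_sub_I0 hi) h1 h2'
      have : s(i,i) ∈ T := hP (by simp [P])
      exact diag_not_mem_X i (hTX this)
  · rintro ⟨⟨_, hnice⟩, hno⟩
    refine ⟨fun z hz => ?_, ?_⟩
    · obtain ⟨i, hi, j, hj, _, rfl⟩ := hTX hz
      exact ⟨i, I_sub_I0 hi, j, I_sub_I0 hj, rfl⟩
    · intro a _ b _ c _ h1 h2
      obtain ⟨ha, hb, hab⟩ := mem_X_elim (hTX h1)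
      obtain ⟨hf, hc, hfc⟩ := mem_X_elim (hTX h2)
      by_cases hca : c = a
      · subst hca
        exact absurd ⟨c, ha, b, hb, Ne.symm hab, h1, by rwa [Sym2.eq_swap] at h2⟩ hno
      by_cases hcb : c = b
      · subst hcb
        have h1' : s(c, a) ∈ T := by rwa [Sym2.eq_swap] at h1
        have h2' : s(c, fstar c a) ∈ T := by
          rw [fstar_comm hc ha]; rwa [Sym2.eq_swap] at h2
        exact absurd ⟨c, hb, a, ha, hab, h1', h2'⟩ hno
      exact hnice a ha b hb c hc hab (fun h => hca h.symm) (fun h => hcb h.symm)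
        (Ne.symm hfc) h1 h2
end

section
/- Let T ⊆ X_0 be a generalised nice set containing ⟨P_{1,2,1}⟩ = {{0,0},{0,1},{0,2},{0,5},{1,1},{1,2},{1,5}}, and let k ∈ {3,4,6,7}. If T contains either {0,k} or {1,k}, then all of {0,k}, {0,k*1}, {1,k}, {1,k*1} belong to T. -/
lemma memP {x : Sym2 ℕ} {a b c : ℕ}
    (h : x = s(a,b) ∨ x = s(b,c) ∨ x = s(c,a) ∨ x = s(a, fstar b c) ∨
      x = s(b, fstar c a) ∨ x = s(c, fstar a b)) : x ∈ P a b c := by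
  simp only [P, Set.mem_insert_iff, Set.mem_singleton_iff]
  tauto

lemma key0306 (T : Set (Sym2 ℕ))
    (hgns : ∀ a ∈ I0, ∀ b ∈ I0, ∀ c ∈ I0,
      s(a,b) ∈ T → s(fstar a b, c) ∈ T → P a b c ⊆ T)
    (h01 : s(0,1) ∈ T) (h11 : s(1,1) ∈ T) (k : ℕ) (hk : k ∈ I0)
    (hc : fstar 1 k = fstar k 1)
    (h : s(0,k) ∈ T ∨ s(1,k) ∈ T) :
    s(0,k) ∈ T ∧ s(0, fstar k 1) ∈ T ∧ s(1,k) ∈ T ∧ s(1, fstar k 1) ∈ T := by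
  have h0 : (0:ℕ) ∈ I0 := by simp [I0]
  have h1 : (1:ℕ) ∈ I0 := by simp [I0]
  have stepA : s(0,k) ∈ T → s(1,k) ∈ T ∧ s(1, fstar k 1) ∈ T := by
    intro h0k
    have hPT : P 1 1 k ⊆ T :=
      hgns 1 h1 1 h1 k hk h11 (by simpa [show fstar 1 1 = 0 by decide] using h0k)
    exact ⟨hPT (memP (Or.inr (Or.inl rfl))),
      hPT (memP (Or.inr (Or.inr (Or.inr (Or.inr (Or.inl rfl))))))⟩
  have stepB : s(1,k) ∈ T → s(0,k) ∈ T ∧ s(0, fstar k 1) ∈ T := by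
    intro h1k
    have hPT : P 0 1 k ⊆ T :=
      hgns 0 h0 1 h1 k hk h01 (by simpa [show fstar 0 1 = 1 by decide] using h1k)
    exact ⟨hPT (memP (Or.inr (Or.inr (Or.inl Sym2.eq_swap)))),
      hPT (memP (Or.inr (Or.inr (Or.inr (Or.inl (by rw [hc]))))))⟩
  rcases h with h | h
  · obtain ⟨a1, a2⟩ := stepA h
    obtain ⟨b1, b2⟩ := stepB a1
    exact ⟨b1, b2, a1, a2⟩
  · obtain ⟨b1, b2⟩ := stepB h
    obtain ⟨a1, a2⟩ := stepA b1
    exact ⟨b1, b2, a1, a2⟩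

theorem TinTX0306 (T : Set (Sym2 ℕ)) (hT : IsGNS T)
    (hP : ({s(0,0), s(0,1), s(0,2), s(0,5), s(1,1), s(1,2), s(1,5)} : Set (Sym2 ℕ)) ⊆ T)
    (k : ℕ) (hk : k = 3 ∨ k = 4 ∨ k = 6 ∨ k = 7)
    (h : s(0,k) ∈ T ∨ s(1,k) ∈ T) :
    s(0,k) ∈ T ∧ s(0, fstar k 1) ∈ T ∧ s(1,k) ∈ T ∧ s(1, fstar k 1) ∈ T := by
  have h01 : s(0,1) ∈ T := hP (by simp)
  have h11 : s(1,1) ∈ T := hP (by simp)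
  rcases hk with rfl | rfl | rfl | rfl <;>
    exact key0306 T hT.2 h01 h11 _ (by simp [I0]) (by decide) h
end

section
/- Let T ⊆ X_0 be a generalised nice set containing ⟨P_{1,2,1}⟩ = {{0,0},{0,1},{0,2},{0,5},{1,1},{1,2},{1,5}}. If {k,k} ∈ T for some k ∈ {3,4,6,7}, then T ∩ X equals either X or X - X_{ℓ^C_{1k}}, where X_{ℓ^C_{1k}} = {{a,b} ∈ X : a,b ∉ {1,k,1*k}}. -/
/-! With `ℓ = {1, k, 1*k}` the line through `1` and `k`, one list of rule instances `(a, b, c)`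
derives, from the seven pairs of `⟨P_{1,2,1}⟩` together with `{k,k}`, every pair of `X` meeting
`ℓ`; a second list derives all of `X` once any single pair of `X` disjoint from `ℓ` is added.
So `T ∩ X` contains `X \ X_ℓ`, and is all of `X` as soon as it meets `X_ℓ`. The derivations were
found by computer search and are replayed by `decide`. -/

lemma mem_I0_of_mk_mem_X0 {a b : ℕ} (h : s(a,b) ∈ X0) : a ∈ I0 ∧ b ∈ I0 := by
  obtain ⟨i, hi, j, hj, hij⟩ := h
  rcases Sym2.eq_iff.1 hij with ⟨rfl, rfl⟩ | ⟨rfl, rfl⟩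
  exacts [⟨hi, hj⟩, ⟨hj, hi⟩]

lemma IsGNS.P_subset {T : Set (Sym2 ℕ)} (hT : IsGNS T) {a b c : ℕ} (hab : s(a,b) ∈ T)
    (hc : s(fstar a b, c) ∈ T) : P a b c ⊆ T :=
  hT.2 a (mem_I0_of_mk_mem_X0 (hT.1 hab)).1 b (mem_I0_of_mk_mem_X0 (hT.1 hab)).2
    c (mem_I0_of_mk_mem_X0 (hT.1 hc)).2 hab hc

def pList (a b c : ℕ) : List (Sym2 ℕ) :=
  [s(a,b), s(b,c), s(c,a), s(a, fstar b c), s(b, fstar c a), s(c, fstar a b)]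

lemma mem_P_of_mem_pList {a b c : ℕ} {z : Sym2 ℕ} (hz : z ∈ pList a b c) : z ∈ P a b c := by
  simpa [pList, P] using hz

def applyRule (S : List (Sym2 ℕ)) : ℕ × ℕ × ℕ → List (Sym2 ℕ)
  | (a, b, c) => if s(a,b) ∈ S ∧ s(fstar a b, c) ∈ S then pList a b c ++ S else S

def replay (S : List (Sym2 ℕ)) (d : List (ℕ × ℕ × ℕ)) : List (Sym2 ℕ) := d.foldl applyRule S

lemma IsGNS.mem_of_mem_replay {T : Set (Sym2 ℕ)} (hT : IsGNS T) (d : List (ℕ × ℕ × ℕ)) :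
    ∀ {S : List (Sym2 ℕ)}, (∀ z ∈ S, z ∈ T) → ∀ z ∈ replay S d, z ∈ T := by
  induction d with
  | nil => exact fun hS => hS
  | cons t d ih =>
    obtain ⟨a, b, c⟩ := t
    intro S hS
    apply ih
    dsimp only [applyRule]
    split_ifs with h
    · intro z hz
      rcases List.mem_append.1 hz with hz | hz
      exacts [hT.P_subset (hS _ h.1) (hS _ h.2) (mem_P_of_mem_pList hz), hS z hz]
    · exact hS

def pairsOff (ℓ : Set ℕ) : Set (Sym2 ℕ) := {z | ∃ a b : ℕ, z = s(a,b) ∧ a ∉ ℓ ∧ b ∉ ℓ}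

lemma mem_range'_of_mem_I {i : ℕ} (hi : i ∈ I) : i ∈ List.range' 1 7 := by
  simp only [I, Set.mem_insert_iff, Set.mem_singleton_iff] at hi
  rw [List.mem_range'_1]
  omega

lemma Set.inter_eq_or_inter_eq_diff {α : Type*} {T X Y : Set α} (hXY : X \ Y ⊆ T)
    (hY : (T ∩ X ∩ Y).Nonempty → X ⊆ T) : T ∩ X = X ∨ T ∩ X = X \ Y := by
  by_cases hne : (T ∩ X ∩ Y).Nonempty
  · exact Or.inl (Set.inter_eq_right.2 (hY hne))
  · refine Or.inr (Set.Subset.antisymm (fun z hz => ⟨hz.2, fun hzY => hne ⟨z, hz, hzY⟩⟩) ?_)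
    exact Set.subset_inter hXY Set.sdiff_subset

section Derivations

variable {T : Set (Sym2 ℕ)} {S : List (Sym2 ℕ)} {ℓ : Set ℕ} {d : List (ℕ × ℕ × ℕ)}

lemma X_diff_pairsOff_subset (hT : IsGNS T) (hS : ∀ z ∈ S, z ∈ T)
    (hd : ∀ i ∈ List.range' 1 7, ∀ j ∈ List.range' 1 7, i ≠ j → (i ∈ ℓ ∨ j ∈ ℓ) →
      s(i,j) ∈ replay S d) :
    X \ pairsOff ℓ ⊆ T := by
  rintro _ ⟨⟨i, hi, j, hj, hij, rfl⟩, hoff⟩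
  refine hT.mem_of_mem_replay d hS _
    (hd i (mem_range'_of_mem_I hi) j (mem_range'_of_mem_I hj) hij ?_)
  by_contra! h
  exact hoff ⟨i, j, rfl, h⟩

lemma X_subset_of_meets_pairsOff (hT : IsGNS T) (hS : ∀ z ∈ S, z ∈ T)
    (hd : ∀ a ∈ List.range' 1 7, ∀ b ∈ List.range' 1 7, a ≠ b → a ∉ ℓ → b ∉ ℓ →
      ∀ i ∈ List.range' 1 7, ∀ j ∈ List.range' 1 7, i ≠ j → s(i,j) ∈ replay (s(a,b) :: S) d)
    (hmeet : (T ∩ X ∩ pairsOff ℓ).Nonempty) :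
    X ⊆ T := by
  obtain ⟨_, ⟨habT, a, ha, b, hb, hab, rfl⟩, a', b', heq, ha', hb'⟩ := hmeet
  have hoff : a ∉ ℓ ∧ b ∉ ℓ := by
    rcases Sym2.eq_iff.1 heq with ⟨rfl, rfl⟩ | ⟨rfl, rfl⟩
    exacts [⟨ha', hb'⟩, ⟨hb', ha'⟩]
  have hS' : ∀ z ∈ s(a,b) :: S, z ∈ T := List.forall_mem_cons.2 ⟨habT, hS⟩
  rintro _ ⟨i, hi, j, hj, hij, rfl⟩
  exact hT.mem_of_mem_replay d hS' _ (hd a (mem_range'_of_mem_I ha) b (mem_range'_of_mem_I hb)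
    hab hoff.1 hoff.2 i (mem_range'_of_mem_I hi) j (mem_range'_of_mem_I hj) hij)

end Derivations

def baseList (k : ℕ) : List (Sym2 ℕ) :=
  [s(k,k), s(0,0), s(0,1), s(0,2), s(0,5), s(1,1), s(1,2), s(1,5)]

def meetDerivation : ℕ → List (ℕ × ℕ × ℕ)
  | 3 => [(3,3,1),(3,3,5),(3,4,1),(3,5,1),(3,6,1),(3,6,2),(3,7,1)]
  | 4 => [(4,4,1),(4,4,2),(4,6,1),(4,7,1),(4,7,2),(4,7,5),(5,1,4)]
  | 6 => [(6,6,2),(6,6,5),(6,7,0),(6,7,1),(7,0,1),(7,3,1),(7,3,6),(1,1,4),(1,2,3)]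
  | 7 => [(7,7,1),(7,7,5),(0,1,7),(1,1,4),(1,2,7),(1,3,7),(1,4,2),(1,4,3)]
  | _ => []

def offDerivation : ℕ → List (ℕ × ℕ × ℕ)
  | 3 => [(3,3,5),(3,4,2),(1,2,4),(3,3,1),(3,4,1),(3,5,7),(3,6,1),(3,7,1),(4,2,1),(1,2,7),
      (1,4,2),(2,4,3),(2,4,6),(2,5,3),(2,5,4)]
  | 4 => [(4,4,5),(5,0,4),(1,1,3),(1,2,3),(2,5,3),(2,6,3),(3,6,5),(4,5,2),(1,2,6),(1,3,2),
      (1,7,4),(2,3,4),(2,3,7),(2,5,3),(2,6,3),(2,6,4)]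
  | 6 => [(6,6,5),(6,7,2),(1,2,4),(4,7,5),(5,1,4),(5,1,7),(0,5,7),(1,1,7),(1,2,7),(1,3,6),
      (2,4,3),(2,4,6),(2,5,3),(2,5,4),(2,7,3)]
  | 7 => [(7,7,5),(1,2,7),(1,3,2),(2,5,3),(1,2,3),(1,5,3),(3,6,5),(1,2,6),(1,4,7),(2,3,4),
      (2,3,7),(2,4,1),(2,5,3),(2,6,4)]
  | _ => []

lemma derivations_correct : ∀ k ∈ [3, 4, 6, 7],
    (∀ i ∈ List.range' 1 7, ∀ j ∈ List.range' 1 7, i ≠ j →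
      (i ∈ ({1, k, fstar 1 k} : Set ℕ) ∨ j ∈ ({1, k, fstar 1 k} : Set ℕ)) →
      s(i,j) ∈ replay (baseList k) (meetDerivation k)) ∧
    (∀ a ∈ List.range' 1 7, ∀ b ∈ List.range' 1 7, a ≠ b →
      a ∉ ({1, k, fstar 1 k} : Set ℕ) → b ∉ ({1, k, fstar 1 k} : Set ℕ) →
      ∀ i ∈ List.range' 1 7, ∀ j ∈ List.range' 1 7, i ≠ j →
        s(i,j) ∈ replay (s(a,b) :: baseList k) (offDerivation k)) := by
  decide

theorem TintX33 (T : Set (Sym2 ℕ)) (hT : IsGNS T)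
    (hP : ({s(0,0), s(0,1), s(0,2), s(0,5), s(1,1), s(1,2), s(1,5)} : Set (Sym2 ℕ)) ⊆ T)
    (k : ℕ) (hk : k = 3 ∨ k = 4 ∨ k = 6 ∨ k = 7) (hkk : s(k,k) ∈ T) :
    T ∩ X = X ∨
    T ∩ X = X \ {z | ∃ a b : ℕ, z = s(a,b) ∧
      a ∉ ({1, k, fstar 1 k} : Set ℕ) ∧ b ∉ ({1, k, fstar 1 k} : Set ℕ)} := by
  have hbase : ∀ z ∈ baseList k, z ∈ T :=
    List.forall_mem_cons.2 ⟨hkk, fun z hz => hP (by simpa using hz)⟩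
  obtain ⟨hmeet, hoff⟩ := derivations_correct k (by simpa using hk)
  exact Set.inter_eq_or_inter_eq_diff (X_diff_pairsOff_subset hT hbase hmeet)
    (X_subset_of_meets_pairsOff hT hbase hoff)
end
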